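/- arXiv:1207.0572 — 3 statements merged into one kernel-verified Lean document; each statement's English description precedes it below -/
import Mathlib

section
/- In any geodesic immersion of K_{3,3} in the 2-sphere such that no three vertices lie on a common great circle, every 4-cycle of K_{3,3} has at most one self-crossing; consequently the immersion has at most nine edge crossings in total. -/
open scoped Classical

noncomputable section

/-- Points of `ℝ³`. -/
abbrev E3 := EuclideanSpace ℝ (Fin 3)

/-- The interior of the shortest geodesic arc joining `X` and `Y` on the unit
sphere: normalizations of strictly positive combinations of `X` and `Y`. -/
def ArcInt (X Y : E3) : Set E3 :=
  {z | ∃ a b : ℝ, 0 < a ∧ 0 < b ∧ z = ‖a • X + b • Y‖⁻¹ • (a • X + b • Y)}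

/-- Two geodesic edges `XY` and `ZW` on the sphere cross if they share a point
interior to both. -/
def Crosses (X Y Z W : E3) : Prop := (ArcInt X Y ∩ ArcInt Z W).Nonempty

/-- Vertices of `K₃,₃`: indices `0,2,4` form one part (labels `1,3,5`). -/
def oI : Fin 3 → Fin 6 := ![0, 2, 4]

/-- Indices `1,3,5` form the other part (labels `2,4,6`). -/
def eI : Fin 3 → Fin 6 := ![1, 3, 5]

/-- A geodesic immersion of `K₃,₃` in the unit sphere: all vertices are unit
vectors and no three of them lie on a common great circle. -/
def GoodImm (v : Fin 6 → E3) : Prop :=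
  (∀ i, ‖v i‖ = 1) ∧
    ∀ i j k : Fin 6, i ≠ j → i ≠ k → j ≠ k → LinearIndependent ℝ ![v i, v j, v k]

/-- The number of crossings of the immersion: the number of unordered pairs of
disjoint edges whose geodesic arcs cross.  An edge is a pair `(a, b)`, joining
vertex `oI a` to vertex `eI b`. -/
def crossingCount (v : Fin 6 → E3) : ℕ :=
  (Finset.univ.filter fun p : (Fin 3 × Fin 3) × (Fin 3 × Fin 3) =>
    p.1.1 < p.2.1 ∧ p.1.2 ≠ p.2.2 ∧
      Crosses (v (oI p.1.1)) (v (eI p.1.2)) (v (oI p.2.1)) (v (eI p.2.2))).card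

/-- The edge `(a,b)` of `K₃,₃` has no crossings with any other edge. -/
def EdgeFree (v : Fin 6 → E3) (p : Fin 3 × Fin 3) : Prop :=
  ∀ q : Fin 3 × Fin 3, q ≠ p →
    ¬ Crosses (v (oI p.1)) (v (eI p.2)) (v (oI q.1)) (v (eI q.2))

/-!
If two opposite pairs of edges `AB, CD` and `AD, CB` of a 4-cycle both cross, then positive
combinations satisfy `a A + b B = c C + d D` and `a' A + d' D = c' C + b' B`. Eliminating `D`
leaves a relation among `A, B, C` in which `A` has a positive coefficient, contradicting that
no three vertices lie on a great circle. Hence each of the nine 4-cycles of `K₃,₃` accounts for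
at most one crossing, and every crossing pair of disjoint edges lies in exactly one 4-cycle.
-/

theorem exists_pos_smul_eq_of_inv_norm_smul_eq {F : Type*} [NormedAddCommGroup F]
    [NormedSpace ℝ F] {x y : F} (h : ‖x‖⁻¹ • x = ‖y‖⁻¹ • y) : ∃ r : ℝ, 0 < r ∧ x = r • y := by
  rcases eq_or_ne x 0 with rfl | hx
  · have hy : y = 0 := by simpa [eq_comm] using h
    exact ⟨1, one_pos, by rw [hy, smul_zero]⟩
  have hy : y ≠ 0 := by
    rintro rfl
    simp [hx] at h
  exact ((sameRay_iff_inv_norm_smul_eq_of_ne hx hy).2 h).exists_pos_right hx hy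

theorem Crosses.exists_pos_smul_add_eq {X Y Z W : E3} (h : Crosses X Y Z W) :
    ∃ a b c d : ℝ, 0 < a ∧ 0 < b ∧ 0 < c ∧ 0 < d ∧ a • X + b • Y = c • Z + d • W := by
  obtain ⟨p, ⟨a, b, ha, hb, rfl⟩, ⟨c, d, hc, hd, hp⟩⟩ := h
  obtain ⟨r, hr, hrw⟩ := exists_pos_smul_eq_of_inv_norm_smul_eq hp
  exact ⟨a, b, r * c, r * d, ha, hb, mul_pos hr hc, mul_pos hr hd, by
    rw [hrw, smul_add, mul_smul, mul_smul]⟩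

theorem not_linearIndependent_of_smul_add_eq {M : Type*} [AddCommGroup M] [Module ℝ M]
    {A B C D : M} {a b c d a' b' c' d' : ℝ} (ha : 0 < a) (hd : 0 < d) (ha' : 0 < a')
    (hd' : 0 < d') (h₁ : a • A + b • B = c • C + d • D) (h₂ : a' • A + d' • D = c' • C + b' • B) :
    ¬ LinearIndependent ℝ ![A, B, C] := by
  intro hABC
  have hrel : (d' * a + d * a') • A + (d' * b - d * b') • B + (-(d' * c + d * c')) • C = 0 := by
    linear_combination (norm := module) d' • h₁ + d • h₂
  have hA := Fintype.linearIndependent_iff.mp hABC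
    ![d' * a + d * a', d' * b - d * b', -(d' * c + d * c')]
    (by simpa [Fin.sum_univ_three] using hrel) 0
  simp only [Matrix.cons_val_zero] at hA
  nlinarith [mul_pos hd' ha, mul_pos hd ha']

theorem not_crosses_and_crosses_of_linearIndependent {A B C D : E3}
    (h : LinearIndependent ℝ ![A, B, C]) : ¬ (Crosses A B C D ∧ Crosses A D C B) := by
  rintro ⟨h₁, h₂⟩
  obtain ⟨a, b, c, d, ha, -, -, hd, e₁⟩ := h₁.exists_pos_smul_add_eq
  obtain ⟨a', d', c', b', ha', hd', -, -, e₂⟩ := h₂.exists_pos_smul_add_eq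
  exact not_linearIndependent_of_smul_add_eq ha hd ha' hd' e₁ e₂ h

theorem oI_injective : Function.Injective oI := by decide

theorem oI_ne_eI (i j : Fin 3) : oI i ≠ eI j := by
  revert i j
  decide

theorem GoodImm.not_crosses_and_crosses {v : Fin 6 → E3} (h : GoodImm v) {a c : Fin 3}
    (hac : a ≠ c) (b d : Fin 3) :
    ¬ (Crosses (v (oI a)) (v (eI b)) (v (oI c)) (v (eI d)) ∧
       Crosses (v (oI a)) (v (eI d)) (v (oI c)) (v (eI b))) :=
  not_crosses_and_crosses_of_linearIndependent <|
    h.2 _ _ _ (oI_ne_eI a b) (oI_injective.ne hac) (oI_ne_eI c b).symm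

/-- A crossing pair of edges `(a, b), (c, d)` with `a < c` is sent to its 4-cycle `(a, c, {b, d})`;
only the other opposite pair `(a, d), (c, b)` of that 4-cycle has the same image. -/
theorem card_filter_le_nine_of_not_and_swap (R : Fin 3 → Fin 3 → Fin 3 → Fin 3 → Prop)
    (hR : ∀ a c b d, a ≠ c → b ≠ d → ¬ (R a b c d ∧ R a d c b)) :
    (Finset.univ.filter fun p : (Fin 3 × Fin 3) × (Fin 3 × Fin 3) =>
      p.1.1 < p.2.1 ∧ p.1.2 ≠ p.2.2 ∧ R p.1.1 p.1.2 p.2.1 p.2.2).card ≤ 9 := by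
  calc _ ≤ (Finset.univ.filter fun q : (Fin 3 × Fin 3) × Sym2 (Fin 3) =>
          q.1.1 < q.1.2 ∧ ¬ q.2.IsDiag).card := by
        refine Finset.card_le_card_of_injOn (fun p => ((p.1.1, p.2.1), s(p.1.2, p.2.2))) ?_ ?_
        · intro p hp
          simp only [Finset.coe_filter, Finset.mem_univ, true_and, Set.mem_ofPred_eq,
            Sym2.mk_isDiag_iff] at hp ⊢
          exact ⟨hp.1, hp.2.1⟩
        · rintro ⟨⟨a, b⟩, ⟨c, d⟩⟩ hp ⟨⟨a', b'⟩, ⟨c', d'⟩⟩ hp' he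
          simp only [Finset.coe_filter, Finset.mem_univ, true_and, Set.mem_ofPred_eq,
            Prod.mk.injEq] at hp hp' he
          obtain ⟨⟨rfl, rfl⟩, hbd⟩ := he
          rcases Sym2.eq_iff.1 hbd with ⟨rfl, rfl⟩ | ⟨rfl, rfl⟩
          · rfl
          · exact (hR a c b d hp.1.ne hp.2.1 ⟨hp.2.2, hp'.2.2⟩).elim
    _ = 9 := by decide

/-- In any geodesic immersion of `K₃,₃` in the sphere (no three vertices on a
common great circle), every 4-cycle has at most one self-crossing (its two pairs
of opposite edges cannot both cross), and consequently there are at most nine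
crossings in total. -/
theorem K33_at_most_nine_crossings (v : Fin 6 → E3) (h : GoodImm v) :
    (∀ a c b d : Fin 3, a ≠ c → b ≠ d →
      ¬ (Crosses (v (oI a)) (v (eI b)) (v (oI c)) (v (eI d)) ∧
         Crosses (v (oI a)) (v (eI d)) (v (oI c)) (v (eI b)))) ∧
    crossingCount v ≤ 9 := by
  have hcycle : ∀ a c b d : Fin 3, a ≠ c → b ≠ d →
      ¬ (Crosses (v (oI a)) (v (eI b)) (v (oI c)) (v (eI d)) ∧
         Crosses (v (oI a)) (v (eI d)) (v (oI c)) (v (eI b))) :=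
    fun _ _ b d hac _ => h.not_crosses_and_crosses hac b d
  exact ⟨hcycle, card_filter_le_nine_of_not_and_swap _ hcycle⟩

end
end

section
/- Let X, Y, A, B, C, D, a1, a2 be points on the 2-sphere (in general position, with all relevant pairs non-antipodal). Suppose the geodesic edge XY crosses AC at a1 and crosses AD at a2, with a1 lying between X and a2 on XY. If moreover XY crosses BD and BX crosses AD, then BX crosses AC. -/
/-!
A nonzero point of `ArcInt X Y` is a positive combination of `X` and `Y`, so every crossing
is an identity `a • X + b • Y = c • Z + d • W` with positive coefficients, and normalization
plays no further role. Writing `B`, `C`, `D` in the basis `X, Y, A` (coordinates `B₀, B₁, B₂`,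
…), these identities become sign conditions: `C` and `D` have positive `Y`-coordinate and
negative `A`-coordinate, `B` has positive `Y`- and `A`-coordinates, the betweenness of `a₁`
gives `C₁ D₀ < C₀ D₁`, and the crossing of `BX` with `AD` gives `B₀ D₁ < B₁ D₀`. Together they
force `C₁ B₀ < B₁ C₀`, and then `C₁ • B + (B₁ C₀ - C₁ B₀) • X = (C₁ B₂ - B₁ C₂) • A + B₁ • C`
exhibits the crossing of `BX` with `AC`.
-/

noncomputable section

open Module

section OpenCone

variable {V : Type*} [AddCommGroup V] [Module ℝ V]

def openCone (X Y : V) : Set V := {z | ∃ a b : ℝ, 0 < a ∧ 0 < b ∧ z = a • X + b • Y}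

section Basis

variable (b : Basis (Fin 3) ℝ V)

theorem repr_pos_and_repr_neg_of_mem_openCone_inter {z C : V}
    (hz : z ∈ openCone (b 0) (b 1) ∩ openCone (b 2) C) :
    0 < b.repr C 1 ∧ b.repr C 2 < 0 := by
  obtain ⟨⟨α, β, -, hβ, rfl⟩, γ, δ, hγ, hδ, h⟩ := hz
  have h₁ : β = δ * b.repr C 1 := by simpa using congr(b.repr $h 1)
  have h₂ : 0 = γ + δ * b.repr C 2 := by simpa using congr(b.repr $h 2)
  exact ⟨pos_of_mul_pos_right (h₁ ▸ hβ) hδ.le, neg_of_mul_neg_right (by linarith) hδ.le⟩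

theorem repr_mul_lt_of_mem_openCone_between {a₁ a₂ C D : V}
    (ha₁ : a₁ ∈ openCone (b 0) (b 1) ∩ openCone (b 2) C)
    (ha₂ : a₂ ∈ openCone (b 0) (b 1) ∩ openCone (b 2) D)
    (hbetween : a₁ ∈ openCone (b 0) a₂) :
    b.repr C 1 * b.repr D 0 < b.repr C 0 * b.repr D 1 := by
  obtain ⟨⟨α₁, β₁, -, -, rfl⟩, γ₁, δ₁, -, hδ₁, hC⟩ := ha₁
  obtain ⟨⟨α₂, β₂, -, hβ₂, rfl⟩, γ₂, δ₂, -, hδ₂, hD⟩ := ha₂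
  obtain ⟨s, t, hs, -, hst⟩ := hbetween
  have hC₀ : α₁ = δ₁ * b.repr C 0 := by simpa using congr(b.repr $hC 0)
  have hC₁ : β₁ = δ₁ * b.repr C 1 := by simpa using congr(b.repr $hC 1)
  have hD₀ : α₂ = δ₂ * b.repr D 0 := by simpa using congr(b.repr $hD 0)
  have hD₁ : β₂ = δ₂ * b.repr D 1 := by simpa using congr(b.repr $hD 1)
  have hst₀ : α₁ = s + t * α₂ := by simpa using congr(b.repr $hst 0)
  have hst₁ : β₁ = t * β₂ := by simpa using congr(b.repr $hst 1)
  have key : δ₁ * δ₂ * (b.repr C 0 * b.repr D 1 - b.repr C 1 * b.repr D 0) = s * β₂ := by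
    linear_combination -δ₂ * b.repr D 1 * hC₀ + δ₂ * b.repr D 0 * hC₁ - α₁ * hD₁ + β₁ * hD₀
      + β₂ * hst₀ - α₂ * hst₁
  have : 0 < δ₁ * δ₂ * (b.repr C 0 * b.repr D 1 - b.repr C 1 * b.repr D 0) := by
    rw [key]; positivity
  exact sub_pos.mp (pos_of_mul_pos_right this (by positivity))

theorem repr_two_pos_of_nonempty_openCone_inter {B D : V} (hD : b.repr D 2 < 0)
    (h : (openCone (b 0) (b 1) ∩ openCone B D).Nonempty) : 0 < b.repr B 2 := by
  obtain ⟨_, ⟨_, _, -, -, rfl⟩, g, k, hg, hk, h⟩ := h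
  have h₂ : 0 = g * b.repr B 2 + k * b.repr D 2 := by simpa using congr(b.repr $h 2)
  exact pos_of_mul_pos_right (by nlinarith) hg.le

theorem repr_one_pos_and_mul_lt_of_nonempty_openCone_inter {B D : V} (hD : 0 < b.repr D 1)
    (h : (openCone B (b 0) ∩ openCone (b 2) D).Nonempty) :
    0 < b.repr B 1 ∧ b.repr B 0 * b.repr D 1 < b.repr B 1 * b.repr D 0 := by
  obtain ⟨_, ⟨i, j, hi, hj, rfl⟩, k, l, -, hl, h⟩ := h
  have h₀ : i * b.repr B 0 + j = l * b.repr D 0 := by simpa using congr(b.repr $h 0)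
  have h₁ : i * b.repr B 1 = l * b.repr D 1 := by simpa using congr(b.repr $h 1)
  refine ⟨pos_of_mul_pos_right (h₁ ▸ by positivity) hi.le, ?_⟩
  have key : i * (b.repr B 1 * b.repr D 0 - b.repr B 0 * b.repr D 1) = j * b.repr D 1 := by
    linear_combination b.repr D 0 * h₁ - b.repr D 1 * h₀
  have : 0 < i * (b.repr B 1 * b.repr D 0 - b.repr B 0 * b.repr D 1) := by
    rw [key]; positivity
  exact sub_pos.mp (pos_of_mul_pos_right this hi.le)

theorem nonempty_openCone_inter_of_repr {B C : V}
    (hB₁ : 0 < b.repr B 1) (hB₂ : 0 < b.repr B 2) (hC₁ : 0 < b.repr C 1) (hC₂ : b.repr C 2 < 0)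
    (hBC : b.repr C 1 * b.repr B 0 < b.repr B 1 * b.repr C 0) :
    (openCone B (b 0) ∩ openCone (b 2) C).Nonempty := by
  refine ⟨_,
    ⟨b.repr C 1, b.repr B 1 * b.repr C 0 - b.repr C 1 * b.repr B 0, hC₁, by linarith, rfl⟩,
    b.repr C 1 * b.repr B 2 - b.repr B 1 * b.repr C 2, b.repr B 1, by nlinarith, hB₁, ?_⟩
  refine b.ext_elem fun i => ?_
  fin_cases i <;> simp; ring

end Basis

theorem four_intersections_openCone {X Y A B C D a₁ a₂ : V}
    (hV : finrank ℝ V = 3) (hXYA : LinearIndependent ℝ ![X, Y, A])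
    (ha₁ : a₁ ∈ openCone X Y ∩ openCone A C)
    (ha₂ : a₂ ∈ openCone X Y ∩ openCone A D)
    (hbetween : a₁ ∈ openCone X a₂)
    (hXYBD : (openCone X Y ∩ openCone B D).Nonempty)
    (hBXAD : (openCone B X ∩ openCone A D).Nonempty) :
    (openCone B X ∩ openCone A C).Nonempty := by
  obtain ⟨b, hb⟩ : ∃ b : Basis (Fin 3) ℝ V, ⇑b = ![X, Y, A] :=
    ⟨basisOfLinearIndependentOfCardEqFinrank hXYA (by simp [hV]),
      coe_basisOfLinearIndependentOfCardEqFinrank _ _⟩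
  obtain rfl : b 0 = X := congrFun hb 0
  obtain rfl : b 1 = Y := congrFun hb 1
  obtain rfl : b 2 = A := congrFun hb 2
  obtain ⟨hC₁, hC₂⟩ := repr_pos_and_repr_neg_of_mem_openCone_inter b ha₁
  obtain ⟨hD₁, hD₂⟩ := repr_pos_and_repr_neg_of_mem_openCone_inter b ha₂
  have hCD := repr_mul_lt_of_mem_openCone_between b ha₁ ha₂ hbetween
  have hB₂ := repr_two_pos_of_nonempty_openCone_inter b hD₂ hXYBD
  obtain ⟨hB₁, hBD⟩ := repr_one_pos_and_mul_lt_of_nonempty_openCone_inter b hD₁ hBXAD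
  refine nonempty_openCone_inter_of_repr b hB₁ hB₂ hC₁ hC₂ ?_
  nlinarith [mul_pos hB₁ (sub_pos.mpr hCD), mul_pos hC₁ (sub_pos.mpr hBD)]

end OpenCone

theorem ne_zero_of_mem_arcInt {X Y z : E3} (hXY : LinearIndependent ℝ ![X, Y])
    (hz : z ∈ ArcInt X Y) : z ≠ 0 := by
  obtain ⟨a, b, ha, -, rfl⟩ := hz
  have hu : a • X + b • Y ≠ 0 := fun h => ha.ne' (LinearIndependent.pair_iff.mp hXY a b h).1
  exact smul_ne_zero (inv_ne_zero (norm_ne_zero_iff.mpr hu)) hu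

theorem mem_openCone_of_mem_arcInt {X Y z : E3} (hz : z ∈ ArcInt X Y) (hz0 : z ≠ 0) :
    z ∈ openCone X Y := by
  obtain ⟨a, b, ha, hb, rfl⟩ := hz
  have hr : 0 < ‖a • X + b • Y‖⁻¹ := by
    refine inv_pos.mpr (norm_pos_iff.mpr fun hu => hz0 ?_)
    rw [hu, smul_zero]
  exact ⟨_, _, mul_pos hr ha, mul_pos hr hb, by rw [smul_add, smul_smul, smul_smul]⟩

theorem Crosses.nonempty_openCone_inter {X Y Z W : E3} (h : Crosses X Y Z W)
    (hXY : LinearIndependent ℝ ![X, Y]) : (openCone X Y ∩ openCone Z W).Nonempty := by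
  obtain ⟨z, hz₁, hz₂⟩ := h
  have hz0 := ne_zero_of_mem_arcInt hXY hz₁
  exact ⟨z, mem_openCone_of_mem_arcInt hz₁ hz0, mem_openCone_of_mem_arcInt hz₂ hz0⟩

theorem crosses_of_nonempty_openCone_inter {X Y Z W : E3}
    (h : (openCone X Y ∩ openCone Z W).Nonempty) : Crosses X Y Z W := by
  obtain ⟨_, ⟨a, b, ha, hb, rfl⟩, c, d, hc, hd, h⟩ := h
  exact ⟨_, ⟨a, b, ha, hb, rfl⟩, c, d, hc, hd, by rw [h]⟩

theorem four_intersections_general (p : Fin 6 → E3) (a₁ a₂ : E3)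
    (hGP : ∀ i j k : Fin 6, i ≠ j → i ≠ k → j ≠ k →
      LinearIndependent ℝ ![p i, p j, p k])
    (ha₁ : a₁ ∈ ArcInt (p 0) (p 1) ∧ a₁ ∈ ArcInt (p 2) (p 4))
    (ha₂ : a₂ ∈ ArcInt (p 0) (p 1) ∧ a₂ ∈ ArcInt (p 2) (p 5))
    (hbetween : a₁ ∈ ArcInt (p 0) a₂)
    (hXYBD : Crosses (p 0) (p 1) (p 3) (p 5))
    (hBXAD : Crosses (p 3) (p 0) (p 2) (p 5)) :
    Crosses (p 3) (p 0) (p 2) (p 4) := by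
  have hpair (i j k : Fin 6) (hij : i ≠ j) (hik : i ≠ k) (hjk : j ≠ k) :
      LinearIndependent ℝ ![p j, p k] :=
    (linearIndependent_finCons.mp (hGP i j k hij hik hjk)).1
  have hXY := hpair 2 0 1 (by decide) (by decide) (by decide)
  have ha₁0 := ne_zero_of_mem_arcInt hXY ha₁.1
  have ha₂0 := ne_zero_of_mem_arcInt hXY ha₂.1
  exact crosses_of_nonempty_openCone_inter <|
    four_intersections_openCone finrank_euclideanSpace_fin
      (hGP 0 1 2 (by decide) (by decide) (by decide))
      ⟨mem_openCone_of_mem_arcInt ha₁.1 ha₁0, mem_openCone_of_mem_arcInt ha₁.2 ha₁0⟩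
      ⟨mem_openCone_of_mem_arcInt ha₂.1 ha₂0, mem_openCone_of_mem_arcInt ha₂.2 ha₂0⟩
      (mem_openCone_of_mem_arcInt hbetween ha₁0)
      (hXYBD.nonempty_openCone_inter hXY)
      (hBXAD.nonempty_openCone_inter (hpair 1 3 0 (by decide) (by decide) (by decide)))

/-- Let `X = p 0`, `Y = p 1`, `A = p 2`, `B = p 3`, `C = p 4`, `D = p 5` be points
on the unit sphere in general position (no three on a common great circle).
Suppose the geodesic edge `XY` crosses `AC` at `a₁` and crosses `AD` at `a₂`,
with `a₁` lying strictly between `X` and `a₂` along `XY`.  If moreover `XY`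
crosses `BD` and `BX` crosses `AD`, then `BX` crosses `AC`. -/
theorem four_intersections (p : Fin 6 → E3) (a₁ a₂ : E3)
    (hUnit : ∀ i, ‖p i‖ = 1)
    (hGP : ∀ i j k : Fin 6, i ≠ j → i ≠ k → j ≠ k →
      LinearIndependent ℝ ![p i, p j, p k])
    (ha₁ : a₁ ∈ ArcInt (p 0) (p 1) ∧ a₁ ∈ ArcInt (p 2) (p 4))
    (ha₂ : a₂ ∈ ArcInt (p 0) (p 1) ∧ a₂ ∈ ArcInt (p 2) (p 5))
    (hbetween : a₁ ∈ ArcInt (p 0) a₂)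
    (hXYBD : Crosses (p 0) (p 1) (p 3) (p 5))
    (hBXAD : Crosses (p 3) (p 0) (p 2) (p 5)) :
    Crosses (p 3) (p 0) (p 2) (p 4) :=
  four_intersections_general p a₁ a₂ hGP ha₁ ha₂ hbetween hXYBD hBXAD

end
end

section
/- Let seven points in R^3 be in general position (no four coplanar), giving a rank-4 oriented matroid on 7 elements labeled 1,...,7 with parts {1,3,5}, {2,4,6}, {7}. If the triangles 712 and 714 are each pierced by exactly two edges of their complementary quadrilaterals, with 712 pierced by edges 34 and 56, then 714 cannot be pierced by both 52 and 36. -/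
open scoped Classical

noncomputable section

/-- The determinant of the three vectors `a, b, c` of `ℝ³`. -/
def det3 (a b c : E3) : ℝ :=
  a 0 * (b 1 * c 2 - b 2 * c 1) - a 1 * (b 0 * c 2 - b 2 * c 0) +
    a 2 * (b 0 * c 1 - b 1 * c 0)

/-- The open flat triangular disk with vertices `A`, `B`, `C`. -/
def OpenTri (A B C : E3) : Set E3 :=
  {x | ∃ a b c : ℝ, 0 < a ∧ 0 < b ∧ 0 < c ∧ a + b + c = 1 ∧
    x = a • A + b • B + c • C}

/-- The segment `XY` pierces the open triangular disk `ABC`. -/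
def Pierces (A B C X Y : E3) : Prop :=
  (openSegment ℝ X Y ∩ OpenTri A B C).Nonempty

/-- The signed intersection of the segment `XY` with the triangle `ABC`:
`±1` if `XY` pierces the open disk of `ABC` (the sign recording on which side of
the plane of `ABC` the point `X` lies), and `0` otherwise. -/
def edgeSign (A B C X Y : E3) : ℤ :=
  if Pierces A B C X Y then
    (if 0 < det3 (B - A) (C - A) (X - A) then 1 else -1) else 0

/-- The linking number of the straight-edge triangle `ABC` with the straight-edge
quadrilateral `DEFG`: the signed count of intersections of the edges of the
quadrilateral with the flat disk bounded by the triangle. -/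
def lkTriQuad (A B C D E F G : E3) : ℤ :=
  edgeSign A B C D E + edgeSign A B C E F + edgeSign A B C F G + edgeSign A B C G D

/-- Seven points in general position: no four of them are coplanar. -/
def GenPos7 (v : Fin 7 → E3) : Prop :=
  ∀ i j k l : Fin 7, i ≠ j → i ≠ k → i ≠ l → j ≠ k → j ≠ l → k ≠ l →
    AffineIndependent ℝ ![v i, v j, v k, v l]

/-- The closed polygonal triangle (1-complex) with vertices `A`, `B`, `C`. -/
def cycle3 (A B C : E3) : Set E3 :=
  segment ℝ A B ∪ segment ℝ B C ∪ segment ℝ C A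

/-- The closed polygonal quadrilateral with vertices `D`, `E`, `F`, `G`. -/
def cycle4 (D E F G : E3) : Set E3 :=
  segment ℝ D E ∪ segment ℝ E F ∪ segment ℝ F G ∪ segment ℝ G D

/-- A two-component link `(K, L)` in `ℝ³` is split (trivial): there is an ambient
isotopy of `ℝ³` (a continuous family of homeomorphisms starting at the identity,
with continuously varying inverses) moving `K` and `L` to opposite sides of a
plane. -/
def SplitLink (K L : Set E3) : Prop :=
  ∃ H : ℝ → (E3 ≃ₜ E3),
    Continuous (fun q : ℝ × E3 => H q.1 q.2) ∧
    Continuous (fun q : ℝ × E3 => (H q.1).symm q.2) ∧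
    (∀ x, H 0 x = x) ∧
    (∀ x ∈ K, H 1 x 0 < 0) ∧ (∀ x ∈ L, 0 < H 1 x 0)

/-- The number of segments in the list `l` (given by their endpoint pairs) that
pierce the open triangular disk `ABC`. -/
def pierceCount (A B C : E3) (l : List (E3 × E3)) : ℕ :=
  l.countP fun e => decide (Pierces A B C e.1 e.2)

/-- Removing the common vertex `C` from the two piercing points (the combination
`t' • z + c • w` has no `C`-component) is the weak elimination axiom for the circuits
`(ABC, XY)` and `(ABD, XC)` of the oriented matroid of the points. -/
theorem Pierces.exchange {A B C D X Y : E3}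
    (h1 : Pierces A B C X Y) (h2 : Pierces A B D X C) :
    Pierces A B D X Y := by
  obtain ⟨z, ⟨s, t, hs, ht, hst, hz⟩, a, b, c, ha, hb, hc, habc, hz'⟩ := h1
  obtain ⟨w, ⟨s', t', hs', ht', hst', hw⟩, a', b', d', ha', hb', hd', hsum', hw'⟩ := h2
  have eq1 : s • X + t • Y = a • A + b • B + c • C := hz.trans hz'
  have eq2 : s' • X + t' • C = a' • A + b' • B + d' • D := hw.trans hw'
  set T : ℝ := t' + c * s'
  have hT : 0 < T := by positivity
  refine ⟨((t' * s + c * s') / T) • X + ((t' * t) / T) • Y,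
    ⟨(t' * s + c * s') / T, (t' * t) / T, by positivity, by positivity, ?_, rfl⟩,
    (t' * a + c * a') / T, (t' * b + c * b') / T, (c * d') / T,
      by positivity, by positivity, by positivity, ?_, ?_⟩
  · field_simp
    linear_combination t' * hst
  · field_simp
    linear_combination t' * habc + c * hsum' - c * hst'
  · linear_combination (norm := module) (T⁻¹ * t') • eq1 + (T⁻¹ * c) • eq2

theorem Pierces.symm {A B C X Y : E3} (h : Pierces A B C X Y) : Pierces A B C Y X := by
  obtain ⟨z, hz, hz'⟩ := h
  exact ⟨z, by rwa [openSegment_symm], hz'⟩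

theorem case1_of_at_most_one_double_general (v : Fin 7 → E3)
    (h56 : Pierces (v 6) (v 0) (v 1) (v 4) (v 5))
    (h714 : pierceCount (v 6) (v 0) (v 3)
      [(v 2, v 1), (v 1, v 4), (v 4, v 5), (v 5, v 2)] = 2) :
    ¬ (Pierces (v 6) (v 0) (v 3) (v 4) (v 1) ∧
       Pierces (v 6) (v 0) (v 3) (v 2) (v 5)) := by
  rintro ⟨h52, h36⟩
  have h56' : Pierces (v 6) (v 0) (v 3) (v 4) (v 5) := h56.exchange h52
  simp only [pierceCount, List.countP_cons, List.countP_nil, decide_eq_true_eq,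
    h52.symm, h36.symm, h56', if_true, zero_add] at h714
  split at h714 <;> omega

/-- Seven points `v 0, …, v 6` in general position in `ℝ³` (labels `1,…,7`, with
parts `{1,3,5}`, `{2,4,6}`, `{7}` of `K₃,₃,₁`).  Suppose the triangle `712`
(vertices `v 6, v 0, v 1`) is pierced by exactly two edges of its complementary
quadrilateral `3456`, namely by `34` and `56` (and not by `45` or `63`), and the
triangle `714` (vertices `v 6, v 0, v 3`) is also pierced by exactly two edges of
its complementary quadrilateral `3256` (edges `32, 25, 56, 63`).  Then `714`
cannot be pierced by both `52` and `36`. -/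
theorem case1_of_at_most_one_double (v : Fin 7 → E3) (hGP : GenPos7 v)
    (h34 : Pierces (v 6) (v 0) (v 1) (v 2) (v 3))
    (h56 : Pierces (v 6) (v 0) (v 1) (v 4) (v 5))
    (h712 : pierceCount (v 6) (v 0) (v 1)
      [(v 2, v 3), (v 3, v 4), (v 4, v 5), (v 5, v 2)] = 2)
    (h714 : pierceCount (v 6) (v 0) (v 3)
      [(v 2, v 1), (v 1, v 4), (v 4, v 5), (v 5, v 2)] = 2) :
    ¬ (Pierces (v 6) (v 0) (v 3) (v 4) (v 1) ∧
       Pierces (v 6) (v 0) (v 3) (v 2) (v 5)) :=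
  case1_of_at_most_one_double_general v h56 h714

end
end
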